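/- arXiv:2201.06394 — 2 statements merged into one kernel-verified Lean document; each statement's English description precedes it below -/
import Mathlib

section
/- Let f_i : 𝔽₂^{n_i} → 𝔽₂^{n_{i+1}}, 0 ≤ i ≤ r-2, be vectorial Boolean functions with r ≥ 3, and fix u_0 ∈ 𝔽₂^{n_0} and u_{r-1} ∈ 𝔽₂^{n_{r-1}}. Then for every i with 0 < i < r-1: |π_{u_0}(x_0) ⋈ π_{u_{r-1}}(x_{r-1})| ≡ Σ_v |π_{u_0}(x_0) ⋈ π_v(x_i)| (mod 2), where the sum ranges over all v ∈ 𝔽₂^{n_i} such that the ANF of x ↦ π_{u_{r-1}}(f_{r-2} ∘ ⋯ ∘ f_i(x)) has coefficient 1 on the monomial x^v, and |π_{u_0}(x_0) ⋈ π_v(x_i)| counts monomial trails through f_0,…,f_{i-1}. -/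
open Finset

section Core

variable {α : Type*}

/-- The monomial `x^u` over `𝔽₂`. -/
def monom [Fintype α] (u x : α → ZMod 2) : ZMod 2 :=
  ∏ i, if u i = 1 then x i else 1

/-- The ANF coefficient of the monomial `x^u` in `f`, via Möbius inversion. -/
def anf [Fintype α] [DecidableEq α] (f : (α → ZMod 2) → ZMod 2) (u : α → ZMod 2) : ZMod 2 :=
  ∑ v ∈ Finset.univ.filter (fun v : α → ZMod 2 => ∀ i, v i = 1 → u i = 1), f v

/-- Hamming weight. -/
def wt [Fintype α] (u : α → ZMod 2) : ℕ :=
  (Finset.univ.filter (fun i => u i = 1)).card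

/-- Algebraic degree, in `ℤ ∪ {-∞}`. -/
def deg [Fintype α] [DecidableEq α] (f : (α → ZMod 2) → ZMod 2) : WithBot ℤ :=
  (Finset.univ.filter (fun u : α → ZMod 2 => anf f u = 1)).sup
    (fun u => ((wt u : ℤ) : WithBot ℤ))

/-- Combine an assignment on `I` with one on `Iᶜ` to a full assignment. -/
def combine [Fintype α] [DecidableEq α] (I : Finset α) (w : ↥I → ZMod 2)
    (y : ↥Iᶜ → ZMod 2) : α → ZMod 2 :=
  fun i => if h : i ∈ I then w ⟨i, h⟩ else y ⟨i, Finset.mem_compl.mpr h⟩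

/-- The coefficient function `g_{f,w}` of `x_I^w` in `f`, a Boolean function of `x_{Iᶜ}`. -/
def coeffFun [Fintype α] [DecidableEq α] (f : (α → ZMod 2) → ZMod 2) (I : Finset α)
    (w : ↥I → ZMod 2) : (↥Iᶜ → ZMod 2) → ZMod 2 :=
  fun y => ∑ t : ↥Iᶜ → ZMod 2, anf f (combine I w t) * monom t y

/-- The vector degree of `f` w.r.t. the index set `I`. -/
def vdeg [Fintype α] [DecidableEq α] (f : (α → ZMod 2) → ZMod 2) (I : Finset α)
    (w : ↥I → ZMod 2) : WithBot ℤ :=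
  deg (coeffFun f I w)

/-- `f` with the variables outside `S` set to `0`. -/
def restrict0 [Fintype α] [DecidableEq α] (f : (α → ZMod 2) → ZMod 2) (S : Finset α) :
    (α → ZMod 2) → ZMod 2 :=
  fun x => f (fun i => if i ∈ S then x i else 0)

/-- Combine an assignment on `I₁` with one on `I₂ \ I₁` to an assignment on `I₂`. -/
def joinFn [DecidableEq α] {I₁ I₂ : Finset α} (w : ↥I₁ → ZMod 2)
    (w' : ↥(I₂ \ I₁) → ZMod 2) : ↥I₂ → ZMod 2 :=
  fun j => if h : (j : α) ∈ I₁ then w ⟨(j : α), h⟩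
           else w' ⟨(j : α), Finset.mem_sdiff.mpr ⟨j.2, h⟩⟩

end Core

/-- Coordinatewise OR of the family `W i`, over indices `i` with `u i = 1`. -/
def orFam {n : ℕ} {β : Type*} (u : Fin n → ZMod 2) (W : Fin n → β → ZMod 2) :
    β → ZMod 2 :=
  fun j => if ∃ i, u i = 1 ∧ W i j = 1 then 1 else 0

/-- The vector numeric mapping `VDEG_d(f, V)`. -/
def VDEG {n : ℕ} {δ : Type*} [Fintype δ] [DecidableEq δ]
    (f : (Fin n → ZMod 2) → ZMod 2) (V : Fin n → (δ → ZMod 2) → WithBot ℤ)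
    (w : δ → ZMod 2) : WithBot ℤ :=
  (Finset.univ.filter (fun p : (Fin n → ZMod 2) × (Fin n → δ → ZMod 2) =>
      anf f p.1 = 1 ∧ (∀ i, p.1 i = 0 → p.2 i = 0) ∧ w = orFam p.1 p.2)).sup
    (fun p => ∑ i ∈ Finset.univ.filter (fun i => p.1 i = 1), V i (p.2 i))

/-- Monomial transition `π_u(x) → π_v(g(x))`. -/
def MonTrans {a b : ℕ} (g : (Fin a → ZMod 2) → (Fin b → ZMod 2))
    (u : Fin a → ZMod 2) (v : Fin b → ZMod 2) : Prop :=
  anf (fun x => monom v (g x)) u = 1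

/-- Monomial trails from level `a` to level `b`, with fixed endpoints `u`, `v`
(trails are normalized to be `0` outside the levels `a, …, b`). -/
def Trails (n : ℕ → ℕ) (f : ∀ i, (Fin (n i) → ZMod 2) → (Fin (n (i + 1)) → ZMod 2))
    (a b : ℕ) (u : Fin (n a) → ZMod 2) (v : Fin (n b) → ZMod 2) :
    Set (∀ i, Fin (n i) → ZMod 2) :=
  {t | t a = u ∧ t b = v ∧ (∀ i, a ≤ i → i < b → MonTrans (f i) (t i) (t (i + 1))) ∧
       (∀ i, i < a → t i = fun _ => 0) ∧ (∀ i, b < i → t i = fun _ => 0)}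

/-- The iterated composition `f_{b-1} ∘ ⋯ ∘ f_a` (meaningful for `a ≤ b`). -/
def iterComp (n : ℕ → ℕ) (f : ∀ i, (Fin (n i) → ZMod 2) → (Fin (n (i + 1)) → ZMod 2))
    (a : ℕ) : (b : ℕ) → (Fin (n a) → ZMod 2) → (Fin (n b) → ZMod 2)
  | 0 => fun x j => if h : a = 0 then x (Fin.cast (show n 0 = n a by rw [h]) j) else 0
  | b + 1 =>
      if h : a = b + 1 then fun x j => x (Fin.cast (show n (b + 1) = n a by rw [h]) j)
      else fun x => f b (iterComp n f a b x)

section Iterated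

/-- Embed an index set `J ⊆ {0,…,n-1}` into the joint index set of size `n' 0 = n + m`. -/
def liftJ {n m N0 : ℕ} (h0 : N0 = n + m) (J : Finset (Fin n)) : Finset (Fin N0) :=
  J.image (fun (j : Fin n) => (⟨j.val, by have := j.isLt; omega⟩ : Fin N0))

/-- Set the `x`-variables outside `S` to zero in a joint assignment. -/
def mask0 {n m N0 : ℕ} (h0 : N0 = n + m) (S : Finset (Fin n)) (z : Fin N0 → ZMod 2) :
    Fin N0 → ZMod 2 :=
  fun i => if h : (i : ℕ) < n then (if (⟨(i : ℕ), h⟩ : Fin n) ∈ S then z i else 0) else z i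

/-- The iterated estimated vector degrees `V_t^S`. -/
def Vt {n m : ℕ} (n' : ℕ → ℕ) (h0 : n' 0 = n + m)
    (f : ∀ t, (Fin (n' t) → ZMod 2) → (Fin (n' (t + 1)) → ZMod 2))
    (J S : Finset (Fin n)) :
    (t : ℕ) → Fin (n' (t + 1)) → (↥(liftJ h0 J) → ZMod 2) → WithBot ℤ
  | 0 => fun i => vdeg (fun z => f 0 (mask0 h0 S z) i) (liftJ h0 J)
  | t + 1 => fun i => VDEG (fun y => f (t + 1) y i) (Vt n' h0 f J S t)

/-- The estimated vector degree `vdeg-hat^S` (here `r = s + 2`). -/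
def vdegHat {n m : ℕ} (n' : ℕ → ℕ) (h0 : n' 0 = n + m)
    (f : ∀ t, (Fin (n' t) → ZMod 2) → (Fin (n' (t + 1)) → ZMod 2))
    (J : Finset (Fin n)) (s : ℕ) (S : Finset (Fin n)) :
    (↥(liftJ h0 J) → ZMod 2) → WithBot ℤ :=
  VDEG (fun y => monom (fun _ => 1) (f (s + 1) y)) (Vt n' h0 f J S s)

/-- The estimated degree `deg-hat^S`. -/
noncomputable def degHat {n m : ℕ} (n' : ℕ → ℕ) (h0 : n' 0 = n + m)
    (f : ∀ t, (Fin (n' t) → ZMod 2) → (Fin (n' (t + 1)) → ZMod 2))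
    (J : Finset (Fin n)) (s : ℕ) (S : Finset (Fin n)) : WithBot ℤ :=
  Finset.univ.sup (fun w : ↥(liftJ h0 J) → ZMod 2 =>
    vdegHat n' h0 f J s S w + ((wt w : ℤ) : WithBot ℤ))

end Iterated

section AuxTrailParity

variable {α : Type*} [Fintype α] [DecidableEq α]

lemma zmod2_ne_one {a : ZMod 2} (h : a ≠ 1) : a = 0 := by revert h; revert a; decide

lemma zmod2_cases (a : ZMod 2) : a = 0 ∨ a = 1 := by revert a; decide

lemma monom_le (u x : α → ZMod 2) :
    monom u x = if (∀ i, u i = 1 → x i = 1) then 1 else 0 := by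
  by_cases h : ∀ i, u i = 1 → x i = 1
  · rw [if_pos h]
    apply Finset.prod_eq_one
    intro i _
    by_cases hu : u i = 1
    · simp [hu, h i hu]
    · simp [hu]
  · rw [if_neg h]
    push_neg at h
    obtain ⟨i, hu, hx⟩ := h
    apply Finset.prod_eq_zero (Finset.mem_univ i)
    simp [hu, zmod2_ne_one hx]

lemma le_antisymm' {u v : α → ZMod 2} (h1 : ∀ i, u i = 1 → v i = 1)
    (h2 : ∀ i, v i = 1 → u i = 1) : u = v := by
  funext i
  rcases zmod2_cases (u i) with h | h <;> rcases zmod2_cases (v i) with h' | h' <;>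
    simp_all [h2 i, h1 i]

lemma exists_gap {v x : α → ZMod 2} (hle : ∀ i, v i = 1 → x i = 1) (hne : v ≠ x) :
    ∃ i, x i = 1 ∧ v i ≠ 1 := by
  by_contra h
  push_neg at h
  exact hne (le_antisymm' hle h)

lemma interval_card (lo hi : α → ZMod 2) :
    (((Finset.univ.filter (fun w : α → ZMod 2 =>
        (∀ i, lo i = 1 → w i = 1) ∧ (∀ i, w i = 1 → hi i = 1))).card : ℕ) : ZMod 2)
      = if lo = hi then 1 else 0 := by
  by_cases heq : lo = hi
  · subst heq
    rw [if_pos rfl]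
    have : (Finset.univ.filter (fun w : α → ZMod 2 =>
        (∀ i, lo i = 1 → w i = 1) ∧ (∀ i, w i = 1 → lo i = 1))) = {lo} := by
      ext w
      simp only [Finset.mem_filter, Finset.mem_univ, true_and, Finset.mem_singleton]
      constructor
      · rintro ⟨h1, h2⟩; exact (le_antisymm' h2 h1)
      · rintro rfl; exact ⟨fun i h => h, fun i h => h⟩
    rw [this]; simp
  · rw [if_neg heq]
    by_cases hle : ∀ i, lo i = 1 → hi i = 1
    · -- even cardinality via involution
      obtain ⟨i₀, hx, hv⟩ := exists_gap hle heq
      have : ((Finset.univ.filter (fun w : α → ZMod 2 =>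
          (∀ i, lo i = 1 → w i = 1) ∧ (∀ i, w i = 1 → hi i = 1))).card : ZMod 2)
          = ∑ w ∈ (Finset.univ.filter (fun w : α → ZMod 2 =>
          (∀ i, lo i = 1 → w i = 1) ∧ (∀ i, w i = 1 → hi i = 1))), (1 : ZMod 2) := by
        rw [Finset.sum_const, nsmul_eq_mul, mul_one]
      rw [this]
      have hmem : ∀ (a : α → ZMod 2), a ∈ (Finset.univ.filter (fun w : α → ZMod 2 =>
          (∀ i, lo i = 1 → w i = 1) ∧ (∀ i, w i = 1 → hi i = 1))) →
          Function.update a i₀ (1 - a i₀) ∈ (Finset.univ.filter (fun w : α → ZMod 2 =>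
          (∀ i, lo i = 1 → w i = 1) ∧ (∀ i, w i = 1 → hi i = 1))) := by
        intro a ha
        simp only [Finset.mem_filter, Finset.mem_univ, true_and] at ha ⊢
        obtain ⟨h1, h2⟩ := ha
        constructor
        · intro i hi
          by_cases hii : i = i₀
          · exact absurd (hii ▸ hi) hv
          · rw [Function.update_of_ne hii]; exact h1 i hi
        · intro i hi
          by_cases hii : i = i₀
          · exact hii ▸ hx
          · rw [Function.update_of_ne hii] at hi; exact h2 i hi
      refine Finset.sum_involution (fun w _ => Function.update w i₀ (1 - w i₀))
        (fun a ha => by decide)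
        (fun a ha h => ?_) (fun a ha => hmem a ha) (fun a ha => ?_)
      · intro hh
        have h2 := congrFun hh i₀
        simp only [Function.update_self] at h2
        revert h2
        generalize a i₀ = c
        revert c; decide
      · funext i
        by_cases hii : i = i₀
        · subst hii; simp only [Function.update_self]; ring
        · simp only [Function.update_of_ne hii]
    · have : (Finset.univ.filter (fun w : α → ZMod 2 =>
          (∀ i, lo i = 1 → w i = 1) ∧ (∀ i, w i = 1 → hi i = 1))) = ∅ := by
        ext w
        simp only [Finset.mem_filter, Finset.mem_univ, true_and, Finset.notMem_empty,
          iff_false, not_and]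
        intro h1 h2
        exact hle (fun i hi => h2 i (h1 i hi))
      rw [this]; simp

lemma anf_expand (f : (α → ZMod 2) → ZMod 2) (x : α → ZMod 2) :
    f x = ∑ u : α → ZMod 2, anf f u * monom u x := by
  have step1 : ∀ u : α → ZMod 2, anf f u * monom u x
      = ∑ v : α → ZMod 2,
          if (∀ i, v i = 1 → u i = 1) ∧ (∀ i, u i = 1 → x i = 1) then f v else 0 := by
    intro u
    rw [anf, monom_le, Finset.sum_filter, Finset.sum_mul]
    refine Finset.sum_congr rfl fun v _ => ?_
    by_cases hA : ∀ i, v i = 1 → u i = 1 <;> by_cases hB : ∀ i, u i = 1 → x i = 1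
    · rw [if_pos hA, if_pos hB, if_pos ⟨hA, hB⟩, mul_one]
    · rw [if_pos hA, if_neg hB, if_neg (fun hc : _ ∧ _ => hB hc.2), mul_zero]
    · rw [if_neg hA, if_pos hB, if_neg (fun hc : _ ∧ _ => hA hc.1), zero_mul]
    · rw [if_neg hA, if_neg hB, if_neg (fun hc : _ ∧ _ => hA hc.1), zero_mul]
  calc f x = ∑ v : α → ZMod 2, (if v = x then 1 else 0) * f v := by
        simp [ite_mul, Finset.sum_ite_eq']
    _ = ∑ v : α → ZMod 2,
        (((Finset.univ.filter (fun u : α → ZMod 2 =>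
          (∀ i, v i = 1 → u i = 1) ∧ (∀ i, u i = 1 → x i = 1))).card : ℕ) : ZMod 2) * f v := by
        refine Finset.sum_congr rfl fun v _ => ?_
        rw [interval_card]
    _ = ∑ v : α → ZMod 2, ∑ u : α → ZMod 2,
          if (∀ i, v i = 1 → u i = 1) ∧ (∀ i, u i = 1 → x i = 1) then f v else 0 := by
        refine Finset.sum_congr rfl fun v _ => ?_
        rw [← Finset.sum_filter, Finset.sum_const, nsmul_eq_mul]
    _ = ∑ u : α → ZMod 2, ∑ v : α → ZMod 2,
          if (∀ i, v i = 1 → u i = 1) ∧ (∀ i, u i = 1 → x i = 1) then f v else 0 :=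
        Finset.sum_comm
    _ = ∑ u : α → ZMod 2, anf f u * monom u x := by
        refine Finset.sum_congr rfl fun u _ => (step1 u).symm

lemma anf_monom (v u : α → ZMod 2) : anf (monom v) u = if u = v then 1 else 0 := by
  rw [anf]
  calc ∑ w ∈ Finset.univ.filter (fun w : α → ZMod 2 => ∀ i, w i = 1 → u i = 1), monom v w
      = ∑ w ∈ Finset.univ.filter (fun w : α → ZMod 2 => ∀ i, w i = 1 → u i = 1),
          if (∀ i, v i = 1 → w i = 1) then (1 : ZMod 2) else 0 :=
        Finset.sum_congr rfl fun w _ => monom_le v w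
    _ = ∑ w ∈ (Finset.univ.filter (fun w : α → ZMod 2 => ∀ i, w i = 1 → u i = 1)).filter
          (fun w => ∀ i, v i = 1 → w i = 1), (1 : ZMod 2) := (Finset.sum_filter _ _).symm
    _ = if u = v then 1 else 0 := by
        rw [Finset.filter_filter]
        have : (Finset.univ.filter (fun w : α → ZMod 2 =>
            (∀ i, w i = 1 → u i = 1) ∧ (∀ i, v i = 1 → w i = 1)))
            = Finset.univ.filter (fun w : α → ZMod 2 =>
            (∀ i, v i = 1 → w i = 1) ∧ (∀ i, w i = 1 → u i = 1)) := by
          apply Finset.filter_congr; intro w _; exact and_comm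
        rw [this, Finset.sum_const, nsmul_eq_mul, mul_one, interval_card]
        by_cases h : v = u
        · rw [if_pos h, if_pos h.symm]
        · rw [if_neg h, if_neg (fun hh => h hh.symm)]

lemma anf_comp {β : Type*} [Fintype β] [DecidableEq β]
    (g : (α → ZMod 2) → β → ZMod 2) (F : (β → ZMod 2) → ZMod 2) (u : α → ZMod 2) :
    anf (fun x => F (g x)) u = ∑ w : β → ZMod 2, anf F w * anf (fun x => monom w (g x)) u := by
  calc anf (fun x => F (g x)) u
      = ∑ v ∈ Finset.univ.filter (fun v : α → ZMod 2 => ∀ i, v i = 1 → u i = 1), F (g v) := rfl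
    _ = ∑ v ∈ Finset.univ.filter (fun v : α → ZMod 2 => ∀ i, v i = 1 → u i = 1),
          ∑ w : β → ZMod 2, anf F w * monom w (g v) :=
        Finset.sum_congr rfl fun v _ => anf_expand F (g v)
    _ = ∑ w : β → ZMod 2, ∑ v ∈ Finset.univ.filter
          (fun v : α → ZMod 2 => ∀ i, v i = 1 → u i = 1), anf F w * monom w (g v) :=
        Finset.sum_comm
    _ = ∑ w : β → ZMod 2, anf F w * ∑ v ∈ Finset.univ.filter
          (fun v : α → ZMod 2 => ∀ i, v i = 1 → u i = 1), monom w (g v) := by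
        simp [Finset.mul_sum]
    _ = _ := rfl


lemma fin_cast_self {k : ℕ} (h : k = k) (j : Fin k) : Fin.cast h j = j := rfl

variable {n : ℕ → ℕ} {f : ∀ i, (Fin (n i) → ZMod 2) → (Fin (n (i + 1)) → ZMod 2)}

lemma iterComp_self (a : ℕ) : iterComp n f a a = fun x => x := by
  cases a with
  | zero =>
      funext x j
      show (if h : 0 = 0 then x (Fin.cast (show n 0 = n 0 by rw [h]) j) else 0) = x j
      rw [dif_pos rfl]; rfl
  | succ b => unfold iterComp; rw [dif_pos rfl]; rfl

lemma iterComp_succ {a b : ℕ} (h : a ≤ b) :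
    iterComp n f a (b + 1) = fun x => f b (iterComp n f a b x) := by
  have hd : iterComp n f a (b + 1) = if h : a = b + 1 then
      (fun x j => x (Fin.cast (show n (b + 1) = n a by rw [h]) j))
      else fun x => f b (iterComp n f a b x) := rfl
  rw [hd, dif_neg (by omega : ¬a = b + 1)]

lemma iterComp_comp {a b : ℕ} (hab : a ≤ b) :
    ∀ c, b ≤ c → iterComp n f a c = fun x => iterComp n f b c (iterComp n f a b x) := by
  intro c hc
  induction c, hc using Nat.le_induction with
  | base => rw [iterComp_self]
  | succ c hc ih =>
      rw [iterComp_succ (by omega : a ≤ c), iterComp_succ hc, ih]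

lemma trails_finite (a b : ℕ) (u : Fin (n a) → ZMod 2) (v : Fin (n b) → ZMod 2) :
    Finite ↥(Trails n f a b u v) := by
  apply Finite.of_injective
    (fun t : ↥(Trails n f a b u v) => (fun i : Fin (b + 1) => (t : ∀ i, Fin (n i) → ZMod 2) i.1))
  intro t₁ t₂ h
  apply Subtype.ext
  funext i
  by_cases hi : i < b + 1
  · exact congrFun h ⟨i, hi⟩
  · rw [t₁.2.2.2.2.2 i (by omega), t₂.2.2.2.2.2 i (by omega)]

lemma trails_self (a : ℕ) (u v : Fin (n a) → ZMod 2) :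
    Trails n f a a u v = if u = v then
      {fun i j => if h : i = a then u (Fin.cast (congrArg n h) j) else 0} else ∅ := by
  by_cases huv : u = v
  · subst huv
    rw [if_pos rfl]
    ext t
    simp only [Set.mem_singleton_iff]
    constructor
    · rintro ⟨h1, h2, h3, h4, h5⟩
      funext i j
      by_cases hia : i = a
      · subst hia
        rw [dif_pos rfl, h1]
        rfl
      · rw [dif_neg hia]
        rcases Nat.lt_or_ge i a with hlt | hge
        · rw [h4 i hlt]
        · rw [h5 i (by omega)]
    · rintro rfl
      refine ⟨?_, ?_, ?_, ?_, ?_⟩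
      · funext j; beta_reduce; rw [dif_pos rfl]; rfl
      · funext j; beta_reduce; rw [dif_pos rfl]; rfl
      · intro i h1 h2; omega
      · intro i hi; funext j; beta_reduce; rw [dif_neg (by omega : ¬i = a)]
      · intro i hi; funext j; beta_reduce; rw [dif_neg (by omega : ¬i = a)]
  · rw [if_neg huv]
    ext t
    simp only [Set.mem_empty_iff_false, iff_false]
    rintro ⟨h1, h2, -, -, -⟩
    exact huv (h1 ▸ h2 ▸ rfl)

lemma trails_card (a : ℕ) : ∀ b, a ≤ b → ∀ (u : Fin (n a) → ZMod 2) (v : Fin (n b) → ZMod 2),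
    ((Nat.card ↥(Trails n f a b u v) : ℕ) : ZMod 2)
      = anf (fun x => monom v (iterComp n f a b x)) u := by
  intro b hb
  induction b, hb using Nat.le_induction with
  | base =>
      intro u v
      rw [trails_self, iterComp_self]
      have : anf (fun x => monom v x) u = anf (monom v) u := rfl
      rw [this, anf_monom]
      by_cases huv : u = v
      · rw [if_pos huv, if_pos huv, Nat.card_coe_set_eq, Set.ncard_singleton]; rfl
      · rw [if_neg huv, if_neg huv, Nat.card_coe_set_eq, Set.ncard_empty]; rfl
  | succ b hb ih =>
      intro u v
      classical
      letI : ∀ w : Fin (n b) → ZMod 2, Finite ↥(Trails n f a b u w) :=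
        fun w => trails_finite a b u w
      letI : ∀ w : Fin (n b) → ZMod 2, Fintype ↥(Trails n f a b u w) :=
        fun w => Fintype.ofFinite _
      -- the equivalence
      have e : ↥(Trails n f a (b + 1) u v) ≃
          (Σ w : {w : Fin (n b) → ZMod 2 // MonTrans (f b) w v}, ↥(Trails n f a b u w.1)) := by
        refine ⟨?_, ?_, ?_, ?_⟩
        · rintro ⟨t, ht⟩
          obtain ⟨h1, h2, h3, h4, h5⟩ := ht
          refine ⟨⟨t b, ?_⟩, ⟨fun i => if i = b + 1 then (fun _ => 0) else t i, ?_, ?_, ?_, ?_, ?_⟩⟩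
          · have := h3 b (by omega) (by omega)
            rwa [h2] at this
          · beta_reduce; rw [if_neg (by omega : ¬a = b + 1)]; exact h1
          · beta_reduce; rw [if_neg (by omega : ¬b = b + 1)]
          · intro i hai hib
            beta_reduce
            rw [if_neg (by omega : ¬i = b + 1), if_neg (by omega : ¬i + 1 = b + 1)]
            exact h3 i hai (by omega)
          · intro i hia
            beta_reduce
            rw [if_neg (by omega : ¬i = b + 1)]
            exact h4 i hia
          · intro i hbi
            beta_reduce
            by_cases hib : i = b + 1
            · rw [if_pos hib]
            · rw [if_neg hib]
              exact h5 i (by omega)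
        · rintro ⟨⟨w, hw⟩, ⟨s, hs⟩⟩
          obtain ⟨h1, h2, h3, h4, h5⟩ := hs
          refine ⟨fun i => if h : i = b + 1 then (fun j => v (Fin.cast (congrArg n h) j))
            else s i, ?_, ?_, ?_, ?_, ?_⟩
          · beta_reduce; rw [dif_neg (by omega : ¬a = b + 1)]; exact h1
          · beta_reduce; rw [dif_pos rfl]; rfl
          · intro i hai hib
            beta_reduce
            by_cases hib' : i = b
            · subst hib'
              rw [dif_neg (by omega : ¬i = i + 1), dif_pos rfl, h2]
              exact hw
            · rw [dif_neg (by omega : ¬i = b + 1), dif_neg (by omega : ¬i + 1 = b + 1)]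
              exact h3 i hai (by omega)
          · intro i hia
            beta_reduce
            rw [dif_neg (by omega : ¬i = b + 1)]
            exact h4 i hia
          · intro i hbi
            beta_reduce
            by_cases hib : i = b + 1
            · omega
            · rw [dif_neg hib]
              exact h5 i (by omega)
        · rintro ⟨t, ht⟩
          obtain ⟨h1, h2, h3, h4, h5⟩ := ht
          apply Subtype.ext
          funext i
          by_cases hib : i = b + 1
          · subst hib
            simp only [dif_pos rfl]
            exact h2.symm
          · simp only [dif_neg hib, if_neg hib]
        · rintro ⟨⟨w, hw⟩, ⟨s, hs⟩⟩
          obtain ⟨h1, h2, h3, h4, h5⟩ := hs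
          have key1 : (if h : (b : ℕ) = b + 1 then (fun j => v (Fin.cast (congrArg n h) j))
              else s b) = w := by
            rw [dif_neg (by omega : ¬b = b + 1)]; exact h2
          have key2 : (fun i => if i = b + 1 then (fun _ => (0 : ZMod 2)) else
              (if h : i = b + 1 then (fun j => v (Fin.cast (congrArg n h) j)) else s i)) = s := by
            funext i
            by_cases hib : i = b + 1
            · rw [if_pos hib, (h5 i (by omega)).symm]
            · rw [if_neg hib, dif_neg hib]
          have hgen : ∀ (w₁ w₂ : Fin (n b) → ZMod 2) (hw₁ : MonTrans (f b) w₁ v)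
              (hw₂ : MonTrans (f b) w₂ v) (s₁ s₂ : ∀ i, Fin (n i) → ZMod 2)
              (hs₁ : s₁ ∈ Trails n f a b u w₁) (hs₂ : s₂ ∈ Trails n f a b u w₂),
              w₁ = w₂ → s₁ = s₂ →
              (⟨⟨w₁, hw₁⟩, ⟨s₁, hs₁⟩⟩ : Σ w : {w : Fin (n b) → ZMod 2 // MonTrans (f b) w v},
                ↥(Trails n f a b u w.1)) = ⟨⟨w₂, hw₂⟩, ⟨s₂, hs₂⟩⟩ := by
            rintro w₁ w₂ hw₁ hw₂ s₁ s₂ hs₁ hs₂ rfl rfl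
            rfl
          exact hgen _ _ _ hw _ _ _ ⟨h1, h2, h3, h4, h5⟩ key1 key2
      letI : DecidablePred (fun w : Fin (n b) → ZMod 2 => MonTrans (f b) w v) :=
        Classical.decPred _
      letI : Fintype {w : Fin (n b) → ZMod 2 // MonTrans (f b) w v} :=
        Subtype.fintype _
      have hcard : Nat.card ↥(Trails n f a (b + 1) u v)
          = ∑ w : {w : Fin (n b) → ZMod 2 // MonTrans (f b) w v},
              Nat.card ↥(Trails n f a b u w.1) := by
        rw [Nat.card_congr e, Nat.card_eq_fintype_card, Fintype.card_sigma]
        exact Finset.sum_congr rfl fun w _ => (Nat.card_eq_fintype_card).symm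
      calc ((Nat.card ↥(Trails n f a (b + 1) u v) : ℕ) : ZMod 2)
          = ∑ w : {w : Fin (n b) → ZMod 2 // MonTrans (f b) w v},
              ((Nat.card ↥(Trails n f a b u w.1) : ℕ) : ZMod 2) := by
            rw [hcard]; push_cast; rfl
        _ = ∑ w : {w : Fin (n b) → ZMod 2 // MonTrans (f b) w v},
              anf (fun x => monom w.1 (iterComp n f a b x)) u :=
            Finset.sum_congr rfl fun w _ => ih u w.1
        _ = ∑ w ∈ Finset.univ.filter (fun w : Fin (n b) → ZMod 2 => MonTrans (f b) w v),
              anf (fun x => monom w (iterComp n f a b x)) u :=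
            (Finset.sum_subtype
              (Finset.univ.filter (fun w : Fin (n b) → ZMod 2 => MonTrans (f b) w v))
              (fun w => by simp) (fun w => anf (fun x => monom w (iterComp n f a b x)) u)).symm
        _ = ∑ w : Fin (n b) → ZMod 2, (if MonTrans (f b) w v then
              anf (fun x => monom w (iterComp n f a b x)) u else 0) := Finset.sum_filter _ _
        _ = ∑ w : Fin (n b) → ZMod 2, anf (fun y => monom v (f b y)) w *
              anf (fun x => monom w (iterComp n f a b x)) u := by
            refine Finset.sum_congr rfl fun w _ => ?_
            by_cases hP : MonTrans (f b) w v
            · rw [if_pos hP, hP, one_mul]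
            · rw [if_neg hP, zmod2_ne_one hP, zero_mul]
        _ = anf (fun x => (fun y => monom v (f b y)) (iterComp n f a b x)) u :=
            (anf_comp _ _ u).symm
        _ = anf (fun x => monom v (iterComp n f a (b + 1) x)) u := by
            rw [iterComp_succ hb]


end AuxTrailParity

/-- The parity of the number of trails from level `0` to level `r-1`
equals the parity of the sum, over monomials `v` at level `i` appearing in the ANF of the
tail composition, of the number of trails from level `0` to `π_v(x_i)`. -/
theorem trail_parity_through_middle (n : ℕ → ℕ)
    (f : ∀ i, (Fin (n i) → ZMod 2) → (Fin (n (i + 1)) → ZMod 2))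
    (r : ℕ) (hr : 3 ≤ r)
    (u₀ : Fin (n 0) → ZMod 2) (u : Fin (n (r - 1)) → ZMod 2)
    (i : ℕ) (hi0 : 0 < i) (hir : i < r - 1) :
    Nat.card (Trails n f 0 (r - 1) u₀ u) % 2 =
      (∑ v ∈ Finset.univ.filter (fun v : Fin (n i) → ZMod 2 =>
          anf (fun x => monom u (iterComp n f i (r - 1) x)) v = 1),
        Nat.card (Trails n f 0 i u₀ v)) % 2 := by
  have hz : ((Nat.card ↥(Trails n f 0 (r - 1) u₀ u) : ℕ) : ZMod 2)
      = ((∑ v ∈ Finset.univ.filter (fun v : Fin (n i) → ZMod 2 =>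
          anf (fun x => monom u (iterComp n f i (r - 1) x)) v = 1),
        Nat.card ↥(Trails n f 0 i u₀ v) : ℕ) : ZMod 2) := by
    have hL := trails_card (n := n) (f := f) 0 (r - 1) (by omega) u₀ u
    have hsplit : anf (fun x => monom u (iterComp n f i (r - 1) (iterComp n f 0 i x))) u₀
        = ∑ w : Fin (n i) → ZMod 2, anf (fun y => monom u (iterComp n f i (r - 1) y)) w *
            anf (fun x => monom w (iterComp n f 0 i x)) u₀ :=
      anf_comp (fun x => iterComp n f 0 i x) (fun y => monom u (iterComp n f i (r - 1) y)) u₀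
    rw [hL, iterComp_comp (Nat.zero_le i) (r - 1) (le_of_lt hir), hsplit]
    rw [Nat.cast_sum]
    calc ∑ w : Fin (n i) → ZMod 2, anf (fun y => monom u (iterComp n f i (r - 1) y)) w *
            anf (fun x => monom w (iterComp n f 0 i x)) u₀
        = ∑ w : Fin (n i) → ZMod 2,
            (if anf (fun y => monom u (iterComp n f i (r - 1) y)) w = 1 then
              anf (fun x => monom w (iterComp n f 0 i x)) u₀ else 0) := by
          refine Finset.sum_congr rfl fun w _ => ?_
          by_cases hP : anf (fun y => monom u (iterComp n f i (r - 1) y)) w = 1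
          · rw [if_pos hP, hP, one_mul]
          · rw [if_neg hP, zmod2_ne_one hP, zero_mul]
      _ = ∑ w ∈ Finset.univ.filter (fun w : Fin (n i) → ZMod 2 =>
            anf (fun y => monom u (iterComp n f i (r - 1) y)) w = 1),
            anf (fun x => monom w (iterComp n f 0 i x)) u₀ := (Finset.sum_filter _ _).symm
      _ = ∑ w ∈ Finset.univ.filter (fun w : Fin (n i) → ZMod 2 =>
            anf (fun y => monom u (iterComp n f i (r - 1) y)) w = 1),
            ((Nat.card ↥(Trails n f 0 i u₀ w) : ℕ) : ZMod 2) :=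
          Finset.sum_congr rfl fun w _ =>
            (trails_card (n := n) (f := f) 0 i (Nat.zero_le i) u₀ w).symm
  exact (ZMod.natCast_eq_natCast_iff' _ _ _).mp hz
end

section
/- Let g_0,…,g_{n-1} be Boolean functions on m variables, I ⊆ {0,…,m-1}, and V_0,…,V_{n-1} : 𝔽₂^I → ℤ ∪ {-∞} with vdeg_I(g_i) ≼ V_i for all i. Then for every u ∈ 𝔽₂ⁿ and w ∈ 𝔽₂^I, the vector degree of the product g^u := ∏_{i : u_i = 1} g_i satisfies vdeg_I(g^u)(w) ≤ max over all tuples (w_0,…,w_{n-1}) ∈ (𝔽₂^I)ⁿ with w_i = 0 whenever u_i = 0 and w = ⋁_{i : u_i = 1} w_i (coordinatewise OR) of the sum Σ_{i : u_i = 1} V_i(w_i), where the empty sum is 0 and the maximum of the empty set is -∞. -/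
open Finset

/-! Over `𝔽₂` we have `x^v · x^v' = x^(v ∨ v')`, so the ANF of a product is the OR-convolution of
the ANFs of its factors. Hence every monomial `x_I^w x_{Iᶜ}^t` of `g^u` is the OR of monomials
`x_I^{w_i} x_{Iᶜ}^{t_i}` of the factors `g_i`, `u_i = 1`: then `w = ⋁ w_i` and
`wt t ≤ ∑ wt t_i ≤ ∑ V_i(w_i)`. -/

lemma ZMod.two_eq_one_of_ne_zero : ∀ a : ZMod 2, a ≠ 0 → a = 1 := by decide

lemma ZMod.two_ne_one_iff : ∀ a : ZMod 2, a ≠ 1 ↔ a = 0 := by decide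

lemma ZMod.two_prod_ite_const {ι : Type*} [Fintype ι] (p : ι → Prop) [DecidablePred p]
    (a : ZMod 2) : (∏ i, if p i then a else 1) = if ∃ i, p i then a else 1 := by
  split_ifs with h
  · obtain ⟨i, hi⟩ := h
    obtain rfl | rfl : a = 0 ∨ a = 1 := by revert a; decide
    · exact Finset.prod_eq_zero (Finset.mem_univ i) (if_pos hi)
    · simp
  · simp_all

section Anf

variable {α : Type*} [Fintype α]

def orAll {ι : Type*} [Fintype ι] (v : ι → α → ZMod 2) : α → ZMod 2 :=
  fun j => if ∃ i, v i j = 1 then 1 else 0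

lemma prod_monom {ι : Type*} [Fintype ι] (v : ι → α → ZMod 2) (x : α → ZMod 2) :
    ∏ i, monom (v i) x = monom (orAll v) x := by
  unfold monom orAll
  rw [Finset.prod_comm]
  refine Finset.prod_congr rfl fun j _ => ?_
  rw [ZMod.two_prod_ite_const]
  split_ifs <;> simp_all

lemma wt_orAll_le {ι : Type*} [Fintype ι] [DecidableEq α] (s : Finset ι)
    {v : ι → α → ZMod 2} (hv : ∀ i ∉ s, v i = 0) : wt (orAll v) ≤ ∑ i ∈ s, wt (v i) := by
  refine (Finset.card_le_card fun j hj => ?_).trans Finset.card_biUnion_le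
  obtain ⟨i, hi⟩ : ∃ i, v i j = 1 := by
    by_contra h
    simp [orAll, h] at hj
  have hs : i ∈ s := by
    by_contra hs
    simp [hv i hs] at hi
  exact Finset.mem_biUnion.mpr ⟨i, hs, by simpa using hi⟩

variable [DecidableEq α]

def ofCoeffs (a : (α → ZMod 2) → ZMod 2) : (α → ZMod 2) → ZMod 2 :=
  fun x => ∑ t, a t * monom t x

lemma sum_monom_filter_le (t u : α → ZMod 2) :
    ∑ v ∈ Finset.univ.filter (fun v : α → ZMod 2 => ∀ i, v i = 1 → u i = 1), monom t v =
      if t = u then 1 else 0 := by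
  have hcube : Finset.univ.filter (fun v : α → ZMod 2 => ∀ i, v i = 1 → u i = 1) =
      Fintype.piFinset fun i => if u i = 1 then (Finset.univ : Finset (ZMod 2)) else {0} := by
    ext v
    have key : ∀ a b : ZMod 2, (a = 1 → b = 1) ↔ a ∈ (if b = 1 then Finset.univ else {0}) := by
      decide
    simp only [Finset.mem_filter, Finset.mem_univ, true_and, Fintype.mem_piFinset, key]
  have hcoord : ∀ b c : ZMod 2, (∑ d ∈ (if b = 1 then (Finset.univ : Finset (ZMod 2)) else {0}),
      if c = 1 then d else 1) = if c = b then 1 else 0 := by decide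
  rw [hcube]
  simp only [monom]
  rw [← Finset.prod_univ_sum (fun i => if u i = 1 then (Finset.univ : Finset (ZMod 2)) else {0})
    (fun i d => if t i = 1 then d else 1)]
  simp only [hcoord, Finset.prod_boole, Finset.mem_univ, true_implies, funext_iff]

lemma anf_ofCoeffs (a : (α → ZMod 2) → ZMod 2) : anf (ofCoeffs a) = a := by
  funext u
  simp only [anf, ofCoeffs]
  rw [Finset.sum_comm]
  simp [← Finset.mul_sum, sum_monom_filter_le]

/-- `anf` is a left inverse of `ofCoeffs`, so on this finite function space it is also a right
inverse. -/
lemma ofCoeffs_anf (f : (α → ZMod 2) → ZMod 2) : ofCoeffs (anf f) = f := by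
  have hsurj : Function.Surjective (ofCoeffs (α := α)) :=
    Finite.injective_iff_surjective.mp (Function.LeftInverse.injective anf_ofCoeffs)
  obtain ⟨a, rfl⟩ := hsurj f
  rw [anf_ofCoeffs]

lemma anf_const_one :
    anf (fun _ : α → ZMod 2 => (1 : ZMod 2)) = fun t => if t = 0 then 1 else 0 := by
  rw [← anf_ofCoeffs (fun t => if t = 0 then 1 else 0)]
  congr 1
  funext x
  simp [ofCoeffs, monom]

lemma anf_coeffFun (f : (α → ZMod 2) → ZMod 2) (I : Finset α) (w : ↥I → ZMod 2)
    (t : ↥Iᶜ → ZMod 2) : anf (coeffFun f I w) t = anf f (combine I w t) :=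
  congrFun (anf_ofCoeffs _) t

variable {ι : Type*} [Fintype ι] [DecidableEq ι]

lemma prod_eq_ofCoeffs (f : ι → (α → ZMod 2) → ZMod 2) :
    (fun x => ∏ i, f i x) = ofCoeffs fun t =>
      ∑ v ∈ Finset.univ.filter (fun v : ι → α → ZMod 2 => orAll v = t), ∏ i, anf (f i) (v i) := by
  funext x
  calc ∏ i, f i x = ∏ i, ∑ u, anf (f i) u * monom u x :=
        Finset.prod_congr rfl fun i _ => (congrFun (ofCoeffs_anf (f i)) x).symm
    _ = ∑ v : ι → α → ZMod 2, (∏ i, anf (f i) (v i)) * monom (orAll v) x := by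
        simp only [Fintype.prod_sum, Finset.prod_mul_distrib, prod_monom]
    _ = _ := by
        simp only [ofCoeffs, Finset.sum_mul]
        rw [← Finset.sum_fiberwise Finset.univ orAll]
        refine Finset.sum_congr rfl fun t _ => Finset.sum_congr rfl fun v hv => ?_
        rw [(Finset.mem_filter.mp hv).2]

lemma anf_prod (f : ι → (α → ZMod 2) → ZMod 2) (t : α → ZMod 2) :
    anf (fun x => ∏ i, f i x) t =
      ∑ v ∈ Finset.univ.filter (fun v : ι → α → ZMod 2 => orAll v = t), ∏ i, anf (f i) (v i) := by
  rw [prod_eq_ofCoeffs, anf_ofCoeffs]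

lemma exists_anf_eq_one_of_anf_prod_eq_one {f : ι → (α → ZMod 2) → ZMod 2} {t : α → ZMod 2}
    (h : anf (fun x => ∏ i, f i x) t = 1) :
    ∃ v : ι → α → ZMod 2, (∀ i, anf (f i) (v i) = 1) ∧ orAll v = t := by
  rw [anf_prod] at h
  obtain ⟨v, hv, hprod⟩ := Finset.exists_ne_zero_of_sum_ne_zero (h ▸ one_ne_zero)
  exact ⟨v, fun i => ZMod.two_eq_one_of_ne_zero _
    (Finset.prod_ne_zero_iff.mp hprod i (Finset.mem_univ i)), (Finset.mem_filter.mp hv).2⟩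

/-- Padding the product with the constant factor `1` outside `s` forces `v i = 0` there. -/
lemma exists_anf_eq_one_of_anf_prod_finset_eq_one {s : Finset ι} {f : ι → (α → ZMod 2) → ZMod 2}
    {t : α → ZMod 2} (h : anf (fun x => ∏ i ∈ s, f i x) t = 1) :
    ∃ v : ι → α → ZMod 2, (∀ i ∈ s, anf (f i) (v i) = 1) ∧ (∀ i ∉ s, v i = 0) ∧ orAll v = t := by
  obtain ⟨v, hv, hvt⟩ := exists_anf_eq_one_of_anf_prod_eq_one
    (f := fun i x => if i ∈ s then f i x else 1) (by simpa only [Finset.prod_ite_mem_eq] using h)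
  refine ⟨v, fun i hi => by simpa only [hi, if_true] using hv i, fun i hi => ?_, hvt⟩
  have hvi := hv i
  simp only [hi, if_false, anf_const_one] at hvi
  by_contra hne
  exact zero_ne_one ((if_neg hne).symm.trans hvi)

end Anf

section VectorDegree

variable {α : Type*} [Fintype α] [DecidableEq α] (I : Finset α)

lemma combine_apply_mem (w : ↥I → ZMod 2) (t : ↥Iᶜ → ZMod 2) (j : ↥I) :
    combine I w t j = w j :=
  dif_pos j.2

lemma combine_apply_mem_compl (w : ↥I → ZMod 2) (t : ↥Iᶜ → ZMod 2) (j : ↥Iᶜ) :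
    combine I w t j = t j :=
  dif_neg (Finset.mem_compl.mp j.2)

lemma combine_restrict (v : α → ZMod 2) : combine I (fun j => v j) (fun j => v j) = v :=
  funext fun k => by unfold combine; split <;> rfl

lemma le_vdeg_of_anf_combine_eq_one {f : (α → ZMod 2) → ZMod 2} {w : ↥I → ZMod 2}
    {t : ↥Iᶜ → ZMod 2} (h : anf f (combine I w t) = 1) : ((wt t : ℤ) : WithBot ℤ) ≤ vdeg f I w :=
  Finset.le_sup (f := fun t => ((wt t : ℤ) : WithBot ℤ))
    (Finset.mem_filter.mpr ⟨Finset.mem_univ t, by rwa [anf_coeffFun]⟩)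

lemma vdeg_le_of_forall_anf_combine_eq_one {f : (α → ZMod 2) → ZMod 2} {w : ↥I → ZMod 2}
    {d : WithBot ℤ} (h : ∀ t, anf f (combine I w t) = 1 → ((wt t : ℤ) : WithBot ℤ) ≤ d) :
    vdeg f I w ≤ d :=
  Finset.sup_le fun t ht => h t (by rw [← anf_coeffFun]; exact (Finset.mem_filter.mp ht).2)

end VectorDegree

lemma orFam_eq_orAll {n : ℕ} {β : Type*} {u : Fin n → ZMod 2} {W : Fin n → β → ZMod 2}
    (h : ∀ i, u i = 0 → W i = 0) : orFam u W = orAll W := by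
  funext j
  have hsupp : (∃ i, u i = 1 ∧ W i j = 1) ↔ ∃ i, W i j = 1 := by
    refine ⟨fun ⟨i, _, hi⟩ => ⟨i, hi⟩, fun ⟨i, hi⟩ => ⟨i, ?_, hi⟩⟩
    by_contra hu
    simp [h i ((ZMod.two_ne_one_iff _).mp hu)] at hi
  simp only [orFam, orAll, hsupp]
  congr

/-- Bound on the vector degree of a product `g^u = ∏_{i : u_i = 1} g_i`. -/
theorem vdeg_prod_le {m n : ℕ} (g : Fin n → (Fin m → ZMod 2) → ZMod 2)
    (I : Finset (Fin m)) (V : Fin n → (↥I → ZMod 2) → WithBot ℤ)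
    (hV : ∀ i w, vdeg (g i) I w ≤ V i w)
    (u : Fin n → ZMod 2) (w : ↥I → ZMod 2) :
    vdeg (fun x => ∏ i ∈ Finset.univ.filter (fun i => u i = 1), g i x) I w ≤
      (Finset.univ.filter (fun W : Fin n → (↥I → ZMod 2) =>
          (∀ i, u i = 0 → W i = 0) ∧ w = orFam u W)).sup
        (fun W => ∑ i ∈ Finset.univ.filter (fun i => u i = 1), V i (W i)) := by
  set U := Finset.univ.filter (fun i => u i = 1)
  refine vdeg_le_of_forall_anf_combine_eq_one I fun t ht => ?_
  obtain ⟨v, hv, hv0, hvt⟩ := exists_anf_eq_one_of_anf_prod_finset_eq_one ht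
  set W : Fin n → ↥I → ZMod 2 := fun i j => v i j
  set T : Fin n → ↥Iᶜ → ZMod 2 := fun i j => v i j
  have hU : ∀ i, u i = 0 → i ∉ U := fun i hu => by simp [U, hu]
  have hW : (∀ i, u i = 0 → W i = 0) ∧ w = orFam u W := by
    have hW0 : ∀ i, u i = 0 → W i = 0 := fun i hu => funext fun j => by simp [W, hv0 i (hU i hu)]
    refine ⟨hW0, ?_⟩
    rw [orFam_eq_orAll hW0]
    exact funext fun j => by rw [← combine_apply_mem I w t j, ← hvt]; rfl
  have ht : t = orAll T := funext fun j => by rw [← combine_apply_mem_compl I w t j, ← hvt]; rfl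
  have hT : ∀ i ∈ U, ((wt (T i) : ℤ) : WithBot ℤ) ≤ V i (W i) := fun i hi =>
    (le_vdeg_of_anf_combine_eq_one I (by rw [combine_restrict]; exact hv i hi)).trans (hV i _)
  calc ((wt t : ℤ) : WithBot ℤ) ≤ (((∑ i ∈ U, wt (T i) : ℕ) : ℤ) : WithBot ℤ) := by
        rw [ht]
        exact_mod_cast wt_orAll_le U fun i hi => funext fun j => by simp [T, hv0 i hi]
    _ = ∑ i ∈ U, ((wt (T i) : ℤ) : WithBot ℤ) := by rw [Nat.cast_sum, WithBot.coe_sum]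
    _ ≤ ∑ i ∈ U, V i (W i) := Finset.sum_le_sum hT
    _ ≤ _ := Finset.le_sup (f := fun W => ∑ i ∈ U, V i (W i))
          (Finset.mem_filter.mpr ⟨Finset.mem_univ W, hW⟩)
end
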